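/- Let G be a group with the word metric coming from a finite generating set, and let A, B be subgroups of G. Then A is coarsely contained in B if and only if the intersection A ∩ B has finite index in A. -/

import Mathlib

open Pointwise

/-- The word length of `g` with respect to the generating set `S`: the least `n` such that
`g` is a product of `n` elements of `S ∪ S⁻¹`. -/
noncomputable def wordLength {G : Type*} [Group G] (S : Set G) (g : G) : ℕ :=
  sInf {n : ℕ | g ∈ (S ∪ S⁻¹) ^ n}

/-- `dist` on `G` is the word metric coming from the finite generating set `S`. -/
def IsWordMetric {G : Type*} [Group G] [MetricSpace G] (S : Set G) : Prop :=
  S.Finite ∧ Subgroup.closure S = ⊤ ∧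
    ∀ g h : G, dist g h = (wordLength S (g⁻¹ * h) : ℝ)

/-- `A` is coarsely contained in `B`: some `r ≥ 0` works so that every point of `A` is within
distance `r` of some point of `B`. -/
def CoarselyContained {X : Type*} [MetricSpace X] (A B : Set X) : Prop :=
  ∃ r : ℝ, 0 ≤ r ∧ ∀ a ∈ A, ∃ b ∈ B, dist a b ≤ r

/-!
In a word metric `dist a b` is the word length of `a⁻¹ * b`, and balls are finite. So `A` is
coarsely contained in `B` iff `A ⊆ B * F` for a finite set `F`, i.e. iff `A` is covered by
finitely many right cosets of `B`. For a subgroup `A` this says exactly that `A ∩ B` has finite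
index in `A`: the map `a (A ∩ B) ↦ a B` embeds `A ⧸ (A ∩ B)` into `G ⧸ B`, and after inverting,
`A ⊆ B * F` says that its image lies among the cosets `f⁻¹ B`, `f ∈ F`.
-/

theorem Set.Finite.pow {M : Type*} [Monoid M] {T : Set M} (hT : T.Finite) :
    ∀ n : ℕ, (T ^ n).Finite
  | 0 => by simp
  | n + 1 => by rw [pow_succ]; exact (hT.pow n).mul hT

theorem List.prod_mem_pow {M : Type*} [Monoid M] {T : Set M} {l : List M}
    (hl : ∀ x ∈ l, x ∈ T) : l.prod ∈ T ^ l.length := by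
  induction l with
  | nil => simp
  | cons x l ih =>
    rw [List.prod_cons, List.length_cons, pow_succ']
    exact Set.mul_mem_mul (hl x List.mem_cons_self)
      (ih fun y hy => hl y (List.mem_cons_of_mem x hy))

section WordLength

variable {G : Type*} [Group G] {S : Set G}

theorem mem_pow_wordLength (hS : Subgroup.closure S = ⊤) (g : G) :
    g ∈ (S ∪ S⁻¹) ^ wordLength S g := by
  have hg : g ∈ Submonoid.closure (S ∪ S⁻¹) := by
    rw [← Subgroup.closure_toSubmonoid, hS]
    trivial
  obtain ⟨l, hl, rfl⟩ := Submonoid.exists_list_of_mem_closure hg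
  exact Nat.sInf_mem (s := {n | l.prod ∈ (S ∪ S⁻¹) ^ n}) ⟨_, List.prod_mem_pow hl⟩

theorem finite_setOf_wordLength_le (hfin : S.Finite) (hS : Subgroup.closure S = ⊤) (n : ℕ) :
    {g : G | wordLength S g ≤ n}.Finite :=
  ((Set.finite_Iic n).biUnion fun k _ => (hfin.union hfin.inv).pow k).subset
    fun g hg => Set.mem_biUnion hg (mem_pow_wordLength hS g)

end WordLength

theorem IsWordMetric.coarselyContained_iff {G : Type*} [Group G] [MetricSpace G] {S : Set G}
    (hS : IsWordMetric S) {A B : Set G} :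
    CoarselyContained A B ↔ ∃ F : Set G, F.Finite ∧ A ⊆ B * F := by
  obtain ⟨hfin, hgen, hdist⟩ := hS
  constructor
  · rintro ⟨r, -, hr⟩
    refine ⟨{g | wordLength S g ≤ ⌊r⌋₊}, finite_setOf_wordLength_le hfin hgen _,
      fun a ha => ?_⟩
    obtain ⟨b, hb, hab⟩ := hr a ha
    have hlen : (wordLength S (b⁻¹ * a) : ℝ) ≤ r := by rwa [← hdist, dist_comm]
    exact ⟨b, hb, b⁻¹ * a, Nat.le_floor hlen, mul_inv_cancel_left b a⟩
  · rintro ⟨F, hF, hAF⟩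
    obtain ⟨N, hN⟩ := (hF.image (wordLength S)).bddAbove
    refine ⟨N, N.cast_nonneg, fun a ha => ?_⟩
    obtain ⟨b, hb, f, hf, rfl⟩ := hAF ha
    refine ⟨b, hb, ?_⟩
    rw [dist_comm, hdist, inv_mul_cancel_left]
    exact_mod_cast hN ⟨f, hf, rfl⟩

namespace Subgroup

variable {G : Type*} [Group G] {A B : Subgroup G}

theorem exists_finite_subset_mul_of_finiteIndex (h : (B.subgroupOf A).FiniteIndex) :
    ∃ F : Set G, F.Finite ∧ (A : Set G) ⊆ B * F := by
  have := finite_quotient_of_finiteIndex (H := B.subgroupOf A)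
  refine ⟨Set.range fun q : A ⧸ B.subgroupOf A => ((q.out : A) : G)⁻¹, Set.finite_range _,
    fun a ha => ?_⟩
  set q : A ⧸ B.subgroupOf A := QuotientGroup.mk ⟨a, ha⟩⁻¹
  have hq : (⟨a, ha⟩⁻¹ : A)⁻¹ * q.out ∈ B.subgroupOf A :=
    QuotientGroup.eq.1 q.out_eq'.symm
  rw [inv_inv, mem_subgroupOf, coe_mul] at hq
  exact ⟨_, hq, _, ⟨q, rfl⟩, mul_inv_cancel_right _ _⟩

theorem finiteIndex_of_subset_mul {F : Set G} (hF : F.Finite) (hAF : (A : Set G) ⊆ B * F) :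
    (B.subgroupOf A).FiniteIndex := by
  let φ : A ⧸ B.subgroupOf A → G ⧸ B := fun q => QuotientGroup.mk (q.out : G)
  have hφ : Function.Injective φ := by
    intro q₁ q₂ h
    rw [← q₁.out_eq', ← q₂.out_eq']
    exact QuotientGroup.eq.2 (mem_subgroupOf.2 (QuotientGroup.eq.1 h))
  have hrange : Set.range φ ⊆ (fun f : G => (QuotientGroup.mk f⁻¹ : G ⧸ B)) '' F := by
    rintro _ ⟨q, rfl⟩
    obtain ⟨b, hb, f, hf, hbf⟩ := hAF (A.inv_mem q.out.2)
    refine ⟨f, hf, QuotientGroup.eq.2 ?_⟩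
    rw [inv_inv, ← inv_inv (q.out : G), ← hbf, mul_inv_rev, mul_inv_cancel_left]
    exact B.inv_mem hb
  have : Finite (Set.range φ) := ((hF.image _).subset hrange).to_subtype
  have := Finite.of_injective_finite_range hφ
  exact finiteIndex_of_finite_quotient

theorem finiteIndex_subgroupOf_iff_exists_finite_subset_mul :
    (B.subgroupOf A).FiniteIndex ↔ ∃ F : Set G, F.Finite ∧ (A : Set G) ⊆ B * F :=
  ⟨exists_finite_subset_mul_of_finiteIndex,
    fun ⟨_, hF, hAF⟩ => finiteIndex_of_subset_mul hF hAF⟩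

end Subgroup

/-- For subgroups `A, B` of a group `G` with a word metric, `A` is coarsely contained in `B`
iff `A ∩ B` has finite index in `A`. -/
theorem coarselyContained_iff_finiteIndex {G : Type*} [Group G] [MetricSpace G]
    (S : Set G) (hS : IsWordMetric S) (A B : Subgroup G) :
    CoarselyContained (A : Set G) (B : Set G) ↔ ((A ⊓ B).subgroupOf A).FiniteIndex := by
  rw [Subgroup.inf_subgroupOf_left, Subgroup.finiteIndex_subgroupOf_iff_exists_finite_subset_mul]
  exact hS.coarselyContained_iff
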